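/- arXiv:1507.05139 — 3 statements merged into one kernel-verified Lean document; each statement's English description precedes it below -/
import Mathlib

section
/- Suppose K ⊆ ℚ(ζ_n) with Gal(ℚ(ζ_n)/K) an elementary abelian 2-group, [K:ℚ] odd, and [K:ℚ] a power of an odd prime p. Then every prime factor q > 3 of n divides n exactly once (q² ∤ n) and has the form q = 2·p^r + 1 for some integer r ≥ 1. -/
open IsCyclotomicExtension

theorem binom_sq_zero' {R : Type*} [CommRing R] (x : R) (hx : x ^ 2 = 0) (m : ℕ) :
    (1 + x) ^ m = 1 + m * x := by
  induction m with
  | zero => simp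
  | succ m ih =>
    have h : (1 + (m : R) * x) * (1 + x) = 1 + ((m : R) + 1) * x + (m : R) * x ^ 2 := by ring
    rw [pow_succ, ih, h, hx, mul_zero, add_zero]
    push_cast
    ring

theorem units_pow_eq_one' (n : ℕ+) (K : IntermediateField ℚ (CyclotomicField n ℚ))
    (h2 : ∀ σ : CyclotomicField n ℚ ≃ₐ[K] CyclotomicField n ℚ, σ ^ 2 = 1)
    (p k : ℕ) (hdeg : Module.finrank ℚ K = p ^ k) :
    ∀ u : (ZMod (n : ℕ))ˣ, u ^ (2 * p ^ k) = 1 := by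
  set L := CyclotomicField n ℚ
  haveI : NeZero ((n : ℕ) : ℚ) := ⟨by simp⟩
  haveI : IsCyclotomicExtension {(n : ℕ)} ℚ L := CyclotomicField.isCyclotomicExtension (n : ℕ) ℚ
  haveI : IsGalois ℚ L := isGalois {(n : ℕ)} ℚ L
  haveI : FiniteDimensional ℚ L := finiteDimensional {(n : ℕ)} ℚ L
  haveI := Classical.decPred (· ∈ K.fixingSubgroup)
  have e : (L ≃ₐ[ℚ] L) ≃* (ZMod (n : ℕ))ˣ :=
    autEquivPow L (Polynomial.cyclotomic.irreducible_rat n.pos)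
  have hcomm : ∀ a b : L ≃ₐ[ℚ] L, a * b = b * a := fun a b =>
    e.injective (by rw [map_mul, map_mul, mul_comm])
  set H := K.fixingSubgroup with hH
  haveI : H.Normal := ⟨fun x hx g => by
    rw [hcomm g x, mul_assoc, mul_inv_cancel, mul_one]; exact hx⟩
  have hcardH : Fintype.card H = Module.finrank K L := by
    rw [← Nat.card_eq_fintype_card]; exact IsGalois.card_fixingSubgroup_eq_finrank K
  have hcardG : Fintype.card (L ≃ₐ[ℚ] L) = Module.finrank ℚ L := by
    rw [← Nat.card_eq_fintype_card]; exact IsGalois.card_aut_eq_finrank ℚ L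
  have htower : Module.finrank ℚ K * Module.finrank K L = Module.finrank ℚ L :=
    Module.finrank_mul_finrank ℚ K L
  have hindex : H.index = p ^ k := by
    have h1 : Nat.card H * H.index = Nat.card (L ≃ₐ[ℚ] L) := Subgroup.card_mul_index H
    rw [Nat.card_eq_fintype_card, Nat.card_eq_fintype_card, hcardH, hcardG, ← htower, hdeg] at h1
    have hpos : 0 < Module.finrank K L := Module.finrank_pos
    exact (Nat.eq_of_mul_eq_mul_left hpos (by linarith [h1])).symm
  intro u
  obtain ⟨σ, rfl⟩ := e.surjective u
  have hmem : σ ^ (p ^ k) ∈ H := hindex ▸ H.pow_index_mem σ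
  have hsq : (σ ^ (p ^ k)) ^ 2 = 1 := by
    have := h2 (K.fixingSubgroupEquiv ⟨σ ^ (p ^ k), hmem⟩)
    have h1 : (⟨σ ^ (p ^ k), hmem⟩ : H) ^ 2 = 1 := by
      apply (K.fixingSubgroupEquiv).injective
      rw [map_pow, this, map_one]
    exact congrArg Subtype.val h1
  rw [← map_pow, ← map_one e, mul_comm, pow_mul, hsq]

/-- If `K ⊆ ℚ(ζ_n)` with `Gal(ℚ(ζ_n)/K)` an elementary abelian 2-group, `[K:ℚ]` odd and
a power of an odd prime `p`, then every prime factor `q > 3` of `n` divides `n` exactly once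
and has the form `q = 2·p^r + 1` for some `r ≥ 1`. -/
theorem prime_factor_form (n : ℕ+) (K : IntermediateField ℚ (CyclotomicField n ℚ))
    (h2 : ∀ σ : CyclotomicField n ℚ ≃ₐ[K] CyclotomicField n ℚ, σ ^ 2 = 1)
    (p k : ℕ) (hp : p.Prime) (hpodd : Odd p)
    (hdeg : Module.finrank ℚ K = p ^ k)
    (q : ℕ) (hq : q.Prime) (hq3 : 3 < q) (hdvd : q ∣ (n : ℕ)) :
    ¬ (q ^ 2 ∣ (n : ℕ)) ∧ ∃ r : ℕ, 1 ≤ r ∧ q = 2 * p ^ r + 1 := by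
  have hu := units_pow_eq_one' n K h2 p k hdeg
  haveI : NeZero (n : ℕ) := ⟨n.pos.ne'⟩
  haveI : Fact q.Prime := ⟨hq⟩
  -- every unit mod m, for m ∣ n, satisfies v ^ (2 p^k) = 1
  have key : ∀ m : ℕ, m ∣ (n : ℕ) → ∀ v : (ZMod m)ˣ, v ^ (2 * p ^ k) = 1 := by
    intro m hm v
    obtain ⟨u, rfl⟩ := ZMod.unitsMap_surjective hm v
    rw [← map_pow, hu, map_one]
  -- step 1 : q - 1 ∣ 2 * p ^ k
  have hq1 : q - 1 ∣ 2 * p ^ k := by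
    obtain ⟨g, hg⟩ := IsCyclic.exists_generator (α := (ZMod q)ˣ)
    have hord : orderOf g = q - 1 := by
      rw [orderOf_eq_card_of_forall_mem_zpowers hg, Nat.card_eq_fintype_card, ZMod.card_units]
    rw [← hord]
    exact orderOf_dvd_of_pow_eq_one (key q hdvd g)
  -- q is odd
  have hqodd : q % 2 = 1 := Nat.odd_iff.mp (hq.odd_of_ne_two (by omega))
  -- step 2 : q - 1 = 2 * p ^ r with r ≥ 1
  obtain ⟨m, hm⟩ : 2 ∣ q - 1 := by omega
  have hmdvd : m ∣ p ^ k := by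
    rcases hq1 with ⟨c, hc⟩
    rw [hm, mul_assoc] at hc
    exact ⟨c, Nat.eq_of_mul_eq_mul_left two_pos hc⟩
  obtain ⟨r, hrk, hrm⟩ := (Nat.dvd_prime_pow hp).mp hmdvd
  have hr1 : 1 ≤ r := by
    rcases Nat.eq_zero_or_pos r with h0 | h1
    · exfalso; rw [h0, pow_zero] at hrm; omega
    · exact h1
  have hqform : q = 2 * p ^ r + 1 := by omega
  refine ⟨?_, r, hr1, hqform⟩
  -- step 3 : q ≠ p since q = 2 p^r + 1 > p
  have hqnep : q ≠ p := by
    have : p ≤ p ^ r := Nat.le_self_pow (by omega) p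
    omega
  -- step 4 : q ^ 2 ∤ n
  intro hsq
  -- construct a unit of order q mod q^2
  have hcop : Nat.Coprime (1 + q) (q ^ 2) := by
    have h1 : Nat.Coprime (1 + q) q := by simpa [Nat.add_comm] using Nat.coprime_succ_self q
    exact h1.pow_right 2
  haveI : NeZero (q ^ 2) := ⟨pow_ne_zero 2 hq.pos.ne'⟩
  set u0 : (ZMod (q ^ 2))ˣ := ZMod.unitOfCoprime (1 + q) hcop with hu0
  have hxsq : ((q : ZMod (q ^ 2))) ^ 2 = 0 := by
    rw [← Nat.cast_pow, ZMod.natCast_self]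
  have hval : ((u0 : ZMod (q ^ 2))) = 1 + (q : ZMod (q ^ 2)) := by
    simp [hu0, ZMod.coe_unitOfCoprime]
  have hpow : u0 ^ q = 1 := by
    apply Units.ext
    push_cast [hval]
    rw [binom_sq_zero' _ hxsq q]
    have h0 : (q : ZMod (q ^ 2)) * q = 0 := by rw [← sq]; exact hxsq
    rw [h0, add_zero]
  have hne : u0 ≠ 1 := by
    intro h
    have : ((u0 : ZMod (q ^ 2))) = 1 := by rw [h]; rfl
    rw [hval] at this
    have hz : (q : ZMod (q ^ 2)) = 0 := by linear_combination this
    rw [ZMod.natCast_eq_zero_iff] at hz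
    have := Nat.le_of_dvd hq.pos hz
    nlinarith [hq.two_le]
  have hordq : orderOf u0 = q := by
    have h1 := orderOf_dvd_of_pow_eq_one hpow
    rcases (Nat.dvd_prime hq).mp h1 with h | h
    · exact absurd (orderOf_eq_one_iff.mp h) hne
    · exact h
  have hq2 : q ∣ 2 * p ^ k := by
    rw [← hordq]
    exact orderOf_dvd_of_pow_eq_one (key (q ^ 2) hsq u0)
  rcases (Nat.Prime.dvd_mul hq).mp hq2 with h | h
  · have := Nat.le_of_dvd (by norm_num) h; omega
  · exact hqnep ((Nat.prime_dvd_prime_iff_eq hq hp).mp (hq.dvd_of_dvd_pow h))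
end

section
/- Suppose K ⊆ ℚ(ζ_n) is a subfield such that both Gal(ℚ(ζ_n)/K) and Gal(K/ℚ) are elementary abelian 2-groups. Then n divides 240. -/
lemma units_pow4_dvd240 (n : ℕ) (hn : n ≠ 0) (h : ∀ u : (ZMod n)ˣ, u ^ 4 = 1) :
    n ∣ 240 := by
  haveI : NeZero n := ⟨hn⟩
  have hd : ∀ d, d ∣ n → ∀ u : (ZMod d)ˣ, u ^ 4 = 1 := by
    intro d hdn u
    obtain ⟨v, rfl⟩ := ZMod.unitsMap_surjective hdn u
    rw [← map_pow, h v, map_one]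
  have h240 : (240 : ℕ) ≠ 0 := by norm_num
  rw [← Nat.factorization_le_iff_dvd hn h240]
  intro p
  by_cases hp : p.Prime
  · by_cases hpn : p ∣ n
    · -- p ∈ {2,3,5}
      have hcyc : IsCyclic (ZMod p)ˣ := by
        haveI : Fact p.Prime := ⟨hp⟩
        infer_instance
      have hexp : Monoid.exponent (ZMod p)ˣ ∣ 4 :=
        Monoid.exponent_dvd_of_forall_pow_eq_one (hd p hpn)
      haveI : Fact p.Prime := ⟨hp⟩
      rw [hcyc.exponent_eq_card, Nat.card_eq_fintype_card, ZMod.card_units_eq_totient,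
        Nat.totient_prime hp] at hexp
      have hple : p ≤ 5 := by
        have := Nat.le_of_dvd (by norm_num) hexp
        omega
      have hp2 := hp.two_le
      have key : ∀ (q k : ℕ), q.Prime → ¬ (∀ u : (ZMod (q ^ k))ˣ, u ^ 4 = 1) →
          n.factorization q ≤ k - 1 := by
        intro q k hq hnot
        by_contra hle
        exact hnot (hd _ ((Nat.Prime.pow_dvd_iff_le_factorization hq hn).mpr (by omega)))
      interval_cases p
      · calc n.factorization 2 ≤ 4 := by
              have := key 2 5 (by norm_num) (by decide)
              omega
          _ ≤ (240:ℕ).factorization 2 :=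
              (Nat.Prime.pow_dvd_iff_le_factorization (by norm_num) h240).mp (by norm_num)
      · calc n.factorization 3 ≤ 1 := by
              have := key 3 2 (by norm_num) (by decide)
              omega
          _ ≤ (240:ℕ).factorization 3 :=
              (Nat.Prime.pow_dvd_iff_le_factorization (by norm_num) h240).mp (by norm_num)
      · norm_num at hp
      · calc n.factorization 5 ≤ 1 := by
              have := key 5 2 (by norm_num) (by decide)
              omega
          _ ≤ (240:ℕ).factorization 5 :=
              (Nat.Prime.pow_dvd_iff_le_factorization (by norm_num) h240).mp (by norm_num)
    · simp [Nat.factorization_eq_zero_of_not_dvd hpn]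
  · simp [Nat.factorization_eq_zero_of_not_prime _ hp]

set_option synthInstance.maxHeartbeats 1000000 in
/-- If `K ⊆ ℚ(ζ_n)` with both `Gal(ℚ(ζ_n)/K)` and `Gal(K/ℚ)` elementary abelian 2-groups,
then `n ∣ 240`. -/
theorem multiquadratic_conductor (n : ℕ+) (K : IntermediateField ℚ (CyclotomicField n ℚ))
    (h2 : ∀ σ : CyclotomicField n ℚ ≃ₐ[K] CyclotomicField n ℚ, σ ^ 2 = 1)
    (hK2 : ∀ σ : K ≃ₐ[ℚ] K, σ ^ 2 = 1) :
    (n : ℕ) ∣ 240 := by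
  apply units_pow4_dvd240 _ n.ne_zero
  set L := CyclotomicField n ℚ
  haveI : IsCyclotomicExtension {(n : ℕ)} ℚ L := CyclotomicField.isCyclotomicExtension (n : ℕ) ℚ
  haveI : IsGalois ℚ L := IsCyclotomicExtension.isGalois {(n : ℕ)} ℚ L
  haveI : FiniteDimensional ℚ L := IsCyclotomicExtension.finiteDimensional {(n : ℕ)} ℚ L
  let e : (L ≃ₐ[ℚ] L) ≃* (ZMod (n : ℕ))ˣ :=
    IsCyclotomicExtension.autEquivPow L (Polynomial.cyclotomic.irreducible_rat n.pos)
  have hcomm : ∀ a b : L ≃ₐ[ℚ] L, a * b = b * a := fun a b =>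
    e.injective (by rw [map_mul, map_mul, mul_comm])
  haveI hnormal : K.fixingSubgroup.Normal := by
    constructor
    intro x hx g
    have hgx : g * x * g⁻¹ = x := by
      rw [hcomm g x, mul_assoc, mul_inv_cancel, mul_one]
    rwa [hgx]
  haveI : IsGalois ℚ K := by
    rw [← IsGalois.fixedField_fixingSubgroup K]
    exact IsGalois.of_fixedField_normal_subgroup K.fixingSubgroup
  have hσ4 : ∀ σ : L ≃ₐ[ℚ] L, σ ^ 4 = 1 := by
    intro σ
    have hker : σ ^ 2 ∈ K.fixingSubgroup := by
      haveI hN : @Normal ℚ K _ _ K.algebra' := by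
        convert (IsGalois.to_normal : Normal ℚ K)
        exact Subsingleton.elim _ _
      rw [← IntermediateField.restrictNormalHom_ker K]
      show AlgEquiv.restrictNormalHom K (σ ^ 2) = 1
      rw [map_pow]
      exact hK2 _
    have := h2 (IntermediateField.fixingSubgroupEquiv K ⟨σ ^ 2, hker⟩)
    rw [← map_pow] at this
    have h1 : (⟨σ ^ 2, hker⟩ : K.fixingSubgroup) ^ 2 = 1 := by
      apply (IntermediateField.fixingSubgroupEquiv K).injective
      rw [this, map_one]
    have := congrArg Subtype.val h1
    simpa [← pow_mul] using this
  intro u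
  rw [← e.apply_symm_apply u, ← map_pow, hσ4, map_one]
end

section
/- If (ℤ/nℤ)^× is a 2-group whose exponent divides 4, then n divides 240. -/
lemma key_dvd (n m : ℕ) [NeZero n] (hm : m ∣ n)
    (hexp : Monoid.exponent (ZMod n)ˣ ∣ 4) :
    Monoid.exponent (ZMod m)ˣ ∣ 4 :=
  dvd_trans (MonoidHom.exponent_dvd (ZMod.unitsMap_surjective hm)) hexp

lemma pow4 (m : ℕ) (he : Monoid.exponent (ZMod m)ˣ ∣ 4) (u : (ZMod m)ˣ) :
    ((u : ZMod m))^4 = 1 := by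
  have h : u ^ 4 = 1 := orderOf_dvd_iff_pow_eq_one.mp ((Monoid.order_dvd_exponent u).trans he)
  have := congrArg Units.val h
  simpa using this

/-- If `(ℤ/nℤ)^×` is a 2-group whose exponent divides 4, then `n ∣ 240`. -/
theorem units_two_group_exponent_four (n : ℕ) (hn : 0 < n)
    (h2 : IsPGroup 2 (ZMod n)ˣ)
    (hexp : Monoid.exponent (ZMod n)ˣ ∣ 4) :
    n ∣ 240 := by
  have : NeZero n := ⟨hn.ne'⟩
  have h32 : ¬ (32 ∣ n) := by
    intro h
    have := pow4 32 (key_dvd n 32 h hexp) (ZMod.unitOfCoprime 3 (by norm_num))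
    revert this; decide
  have h9 : ¬ (9 ∣ n) := by
    intro h
    have := pow4 9 (key_dvd n 9 h hexp) (ZMod.unitOfCoprime 2 (by norm_num))
    revert this; decide
  have h25 : ¬ (25 ∣ n) := by
    intro h
    have := pow4 25 (key_dvd n 25 h hexp) (ZMod.unitOfCoprime 2 (by norm_num))
    revert this; decide
  have hp : ∀ p : ℕ, p.Prime → p ∣ n → p ≤ 5 := by
    intro p pp hpn
    have : NeZero p := ⟨pp.pos.ne'⟩
    have hc : Monoid.exponent (ZMod p)ˣ ∣ 4 := key_dvd n p hpn hexp
    haveI : Fact p.Prime := ⟨pp⟩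
    have hcard : Nat.card (ZMod p)ˣ = p - 1 := by
      simp [Nat.card_eq_fintype_card, ZMod.card_units_eq_totient, Nat.totient_prime pp]
    have hexpc : Monoid.exponent (ZMod p)ˣ = p - 1 := by
      rw [IsCyclic.exponent_eq_card, hcard]
    rw [hexpc] at hc
    have := Nat.le_of_dvd (by norm_num) hc
    omega
  rw [← Nat.factorization_le_iff_dvd hn.ne' (by norm_num)]
  intro p
  by_cases pp : p.Prime
  · by_cases hpn : p ∣ n
    · have hple := hp p pp hpn
      interval_cases p
      · exact absurd pp (by norm_num)
      · exact absurd pp (by norm_num)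
      · have ha : n.factorization 2 < 5 := by
          by_contra hcon
          push_neg at hcon
          exact h32 (by
            rw [show (32:ℕ) = 2^5 by norm_num]
            exact (Nat.Prime.pow_dvd_iff_le_factorization pp hn.ne').mpr hcon)
        have hc : 4 ≤ (240:ℕ).factorization 2 :=
          (Nat.Prime.pow_dvd_iff_le_factorization pp (by norm_num)).mp (by norm_num)
        omega
      · have ha : n.factorization 3 < 2 := by
          by_contra hcon
          push_neg at hcon
          exact h9 (by
            rw [show (9:ℕ) = 3^2 by norm_num]
            exact (Nat.Prime.pow_dvd_iff_le_factorization pp hn.ne').mpr hcon)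
        have hc : 1 ≤ (240:ℕ).factorization 3 :=
          (Nat.Prime.pow_dvd_iff_le_factorization pp (by norm_num)).mp (by norm_num)
        omega
      · exact absurd pp (by norm_num)
      · have ha : n.factorization 5 < 2 := by
          by_contra hcon
          push_neg at hcon
          exact h25 (by
            rw [show (25:ℕ) = 5^2 by norm_num]
            exact (Nat.Prime.pow_dvd_iff_le_factorization pp hn.ne').mpr hcon)
        have hc : 1 ≤ (240:ℕ).factorization 5 :=
          (Nat.Prime.pow_dvd_iff_le_factorization pp (by norm_num)).mp (by norm_num)
        omega
    · simp [Nat.factorization_eq_zero_of_not_dvd hpn]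
  · simp [Nat.factorization_eq_zero_of_not_prime _ pp]
end
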